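/- The translation T of timed safe mobile ambients into systems of mutual mobile membranes with timers does not reflect reductions: there exist timed safe mobile ambient processes P and Q and configurations M, N ∈ M(Π) with M = T(P), M → N and N = T(Q), yet P does not reduce to Q (P ⇢̸ Q). A witness is P = n^{Δt4}[in^{Δt1}m.in^{Δt2}k.out^{Δt3}s]^ρ | m^{Δt6}[ī̄n m^{Δt5}]^ρ, whose translation M = [in^{Δt1}m in^{Δt2}k out^{Δt3}s]_n^{Δt4} [ī̄n m^{Δt5}]_m^{Δt6} reduces in Π to N = [[in^{Δt2}k out^{Δt3}s]_n^{Δt4}]_m^{Δt6}, and N = T(Q) for Q = m^{Δt6}[n^{Δt4}[out^{Δt3}s.in^{Δt2}k]^ρ]^ρ, but P ⇢̸ Q. -/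
import Mathlib


/-!
Timed safe mobile ambients and their translation into systems of mutual
mobile membranes with timers (B. Aman, G. Ciobanu).
-/

namespace TimedAmbients

/-- Timers: `ℕ∞ = ℕ ∪ {∞}`; truncated subtraction realizes `∞ - 1 = ∞`. -/
abbrev Timer : Type := ℕ∞

variable {N : Type}

/-- Capabilities of (timed) safe mobile ambients:
`in n`, `out n`, and the co-capabilities `ī̄n n`, `ōūt n`. -/
inductive Cap (N : Type) : Type where
  | inn  : N → Cap N
  | out  : N → Cap N
  | coIn : N → Cap N
  | coOut : N → Cap N
  deriving DecidableEq

/-- Ambient tags: `a` (active) and `p` (passive). -/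
inductive Tag : Type where
  | active | passive
  deriving DecidableEq

/-- Timed safe mobile ambient processes:
`P ::= 0 | C^{Δt}.P | n^{Δt}[P]^ρ | P|Q`. -/
inductive Proc (N : Type) : Type where
  | nil  : Proc N
  | act  : Cap N → Timer → Proc N → Proc N
  | amb  : N → Timer → Tag → Proc N → Proc N
  | par  : Proc N → Proc N → Proc N

/-- Structural congruence `Ξ` of processes. -/
inductive SCong : Proc N → Proc N → Prop where
  | refl (P : Proc N) : SCong P P
  | symm {P Q : Proc N} : SCong P Q → SCong Q P
  | trans {P Q R : Proc N} : SCong P Q → SCong Q R → SCong P R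
  | parComm (P Q : Proc N) : SCong (.par P Q) (.par Q P)
  | parAssoc (P Q R : Proc N) : SCong (.par (.par P Q) R) (.par P (.par Q R))
  | parNil (P : Proc N) : SCong (.par P .nil) P
  | congPar {P P' Q Q' : Proc N} : SCong P P' → SCong Q Q' → SCong (.par P Q) (.par P' Q')
  | congAmb {P P' : Proc N} (n : N) (t : Timer) (ρ : Tag) :
      SCong P P' → SCong (.amb n t ρ P) (.amb n t ρ P')
  | congAct {P P' : Proc N} (C : Cap N) (t : Timer) :
      SCong P P' → SCong (.act C t P) (.act C t P')

/-- The global time progress function `φ_Δ`: timers of top-level capabilities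
and of ambients decrease by one (`∞ - 1 = ∞`); a capability or an ambient
whose timer is `0` is consumed/dissolved, releasing its continuation or its
content; passive ambients become active again. -/
def phi [DecidableEq N] : Proc N → Proc N
  | .nil => .nil
  | .act C t P => if t = 0 then P else .act C (t - 1) P
  | .amb n t _ P => if t = 0 then P else .amb n (t - 1) Tag.active (phi P)
  | .par P Q => .par (phi P) (phi Q)

/-- The reduction rules (R-In), (R-Out) and the contextual rules (R-Amb),
(R-Par1), (R-Par2), (R-Struct) — every rule of the reduction relation `⇢`
except (R-TimePass). -/
inductive Red0 : Proc N → Proc N → Prop where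
  | rIn (n m : N) (t1 t2 t3 t4 : Timer) (P Q R : Proc N) (ρ : Tag) :
      Red0 (.par (.amb n t1 Tag.active (.par (.act (Cap.inn m) t2 P) Q))
                 (.amb m t3 ρ (.act (Cap.coIn m) t4 R)))
           (.amb m t3 ρ (.par (.amb n t1 Tag.passive (.par P Q)) R))
  | rOut (n m : N) (t1 t2 t3 t4 : Timer) (P Q R : Proc N) (ρ : Tag) :
      Red0 (.amb m t3 ρ (.par (.amb n t1 Tag.active (.par (.act (Cap.out m) t2 P) Q))
                              (.act (Cap.coOut m) t4 R)))
           (.par (.amb n t1 Tag.passive (.par P Q)) (.amb m t3 ρ R))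
  | rAmb {P Q : Proc N} (n : N) (t : Timer) (ρ : Tag) :
      Red0 P Q → Red0 (.amb n t ρ P) (.amb n t ρ Q)
  | rPar1 {P Q : Proc N} (R : Proc N) : Red0 P Q → Red0 (.par P R) (.par Q R)
  | rPar2 {P Q P' Q' : Proc N} : Red0 P Q → Red0 P' Q' → Red0 (.par P P') (.par Q Q')
  | rStruct {P' P Q Q' : Proc N} : SCong P' P → Red0 P Q → SCong Q Q' → Red0 P' Q'

/-- The one-step reduction relation `⇢` of timed safe mobile ambients: all the
rules (R-In), (R-Out), (R-Amb), (R-Par1), (R-Par2), (R-Struct), together with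
(R-TimePass): if no other rule applies, `M ⇢ φ_Δ(M)`. -/
def Red [DecidableEq N] (P Q : Proc N) : Prop :=
  Red0 P Q ∨ ((¬ ∃ Q', Red0 P Q') ∧ Q = phi P)

/-! ### Configurations of the associated system of mutual mobile membranes
with timers -/

/-- A membrane (with timer), labelled by an ambient name, containing a
multiset of timed objects (translated capabilities, each with its timer) and
child membranes. -/
inductive MTree (N : Type) : Type where
  | node : N → Timer → Multiset (Cap N × Timer) → List (MTree N) → MTree N

/-- A configuration of the system of mutual mobile membranes with timers
associated to a process: a multiset of top-level timed objects together with
the list of top-level membranes. -/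
abbrev Cfg (N : Type) : Type := Multiset (Cap N × Timer) × List (MTree N)

/-- The translation `T` of timed safe mobile ambients into configurations of
systems of mutual mobile membranes with timers:
`T(C^{Δt}.A₁) = C^{Δt} T(A₁)`, `T(n^{Δt}[A₁]^ρ) = [T(A₁)]_n^{Δt}`,
`T(A₁|A₂) = T(A₁) T(A₂)`, `T(0) = λ` (the ambient tag `ρ` is discarded). -/
def trans : Proc N → Cfg N
  | .nil => (0, [])
  | .act C t P => ((C, t) ::ₘ (trans P).1, (trans P).2)
  | .amb n t _ P => (0, [MTree.node n t (trans P).1 (trans P).2])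
  | .par P Q => ((trans P).1 + (trans Q).1, (trans P).2 ++ (trans Q).2)

/-- One evolution step `M → N` of the system of mutual mobile membranes with
timers associated to a process: the mutual endocytosis rules
`[in^{Δt2}m]_n^{Δt1} [ī̄n m^{Δt4}]_m^{Δt3} → [[ ]_n^{Δt1}]_m^{Δt3}`
and the mutual exocytosis rules
`[[out^{Δt2}m]_n^{Δt1} ōūt m^{Δt4}]_m^{Δt3} → [ ]_n^{Δt1} [ ]_m^{Δt3}`
(applied anywhere in the configuration, carrying along the remaining contents
of the involved membranes), together with the object and membrane
time-passing rules and the object and membrane dissolution rules. -/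
inductive MStep : Cfg N → Cfg N → Prop where
  | endo {n m : N} {t1 t2 t3 t4 : Timer} {x y : Multiset (Cap N × Timer)}
      {o : Multiset (Cap N × Timer)} {l cn cs rest : List (MTree N)}
      (hp : l.Perm (MTree.node n t1 ((Cap.inn m, t2) ::ₘ x) cn ::
                    MTree.node m t3 ((Cap.coIn m, t4) ::ₘ y) cs :: rest)) :
      MStep (o, l) (o, MTree.node m t3 y (MTree.node n t1 x cn :: cs) :: rest)
  | exo {n m : N} {t1 t2 t3 t4 : Timer} {x y : Multiset (Cap N × Timer)}
      {o : Multiset (Cap N × Timer)} {l cn cs cs' rest : List (MTree N)}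
      (hcs : cs'.Perm (MTree.node n t1 ((Cap.out m, t2) ::ₘ x) cn :: cs))
      (hp : l.Perm (MTree.node m t3 ((Cap.coOut m, t4) ::ₘ y) cs' :: rest)) :
      MStep (o, l) (o, MTree.node n t1 x cn :: MTree.node m t3 y cs :: rest)
  | objTick {o : Multiset (Cap N × Timer)} {l : List (MTree N)} {C : Cap N}
      {t : Timer} (ht : t ≠ 0) :
      MStep ((C, t) ::ₘ o, l) ((C, t - 1) ::ₘ o, l)
  | objDissolve {o : Multiset (Cap N × Timer)} {l : List (MTree N)} {C : Cap N} :
      MStep ((C, (0 : Timer)) ::ₘ o, l) (o, l)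
  | memTick {o o' : Multiset (Cap N × Timer)} {l ch rest : List (MTree N)}
      {n : N} {t : Timer} (ht : t ≠ 0)
      (hp : l.Perm (MTree.node n t o' ch :: rest)) :
      MStep (o, l) (o, MTree.node n (t - 1) o' ch :: rest)
  | memDissolve {o o' : Multiset (Cap N × Timer)} {l ch rest : List (MTree N)} {n : N}
      (hp : l.Perm (MTree.node n (0 : Timer) o' ch :: rest)) :
      MStep (o, l) (o + o', ch ++ rest)
  | ctx {o o' o'' : Multiset (Cap N × Timer)} {l ch ch' rest : List (MTree N)}
      {n : N} {t : Timer}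
      (hp : l.Perm (MTree.node n t o' ch :: rest))
      (hs : MStep (o', ch) (o'', ch')) :
      MStep (o, l) (o, MTree.node n t o'' ch' :: rest)

/-- `M(Π)`: the set of configurations obtained along all possible evolutions
of the system of mutual mobile membranes with timers associated to the
process `P` (whose initial configuration is `T(P)`). -/
def MReach (P : Proc N) (M : Cfg N) : Prop :=
  Relation.ReflTransGen MStep (trans P) M

end TimedAmbients

namespace TimedAmbients

/- **Remark (the translation does not reflect reductions).**
There exist timed safe mobile ambient processes `P` and `Q` and configurations
`M, N ∈ M(Π)` with `M = T(P)`, `M → N` and `N = T(Q)`, yet `P ⇢̸ Q`.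
The witness is `P = n^{Δt4}[in^{Δt1}m.in^{Δt2}k.out^{Δt3}s]^ρ |
m^{Δt6}[ī̄n m^{Δt5}]^ρ`, whose translation
`M = [in^{Δt1}m in^{Δt2}k out^{Δt3}s]_n^{Δt4} [ī̄n m^{Δt5}]_m^{Δt6}`
reduces in `Π` to `N = [[in^{Δt2}k out^{Δt3}s]_n^{Δt4}]_m^{Δt6}`, and
`N = T(Q)` for `Q = m^{Δt6}[n^{Δt4}[out^{Δt3}s.in^{Δt2}k]^ρ]^ρ`,
but `P ⇢̸ Q` (for any choice of tags). -/

section Aux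
set_option linter.unusedSectionVars false

variable {N : Type} [DecidableEq N]

/-- Top-level (unguarded) capabilities of a process. -/
def heads : Proc N → Multiset (Cap N)
  | .nil => 0
  | .act C _ _ => {C}
  | .amb _ _ _ _ => 0
  | .par P Q => heads P + heads Q

/-- Whether somewhere in `P` there is a capability `out s` whose continuation
has an unguarded capability `in k`. -/
def bad (s k : N) : Proc N → Bool
  | .nil => false
  | .act C _ P => (decide (C = Cap.out s) && decide (Cap.inn k ∈ heads P)) || bad s k P
  | .amb _ _ _ P => bad s k P
  | .par P Q => bad s k P || bad s k Q

lemma heads_scong {P Q : Proc N} (h : SCong P Q) : heads P = heads Q := by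
  induction h <;> simp_all [heads] <;> first
    | exact add_comm _ _
    | exact add_assoc _ _ _

lemma bad_scong (s k : N) {P Q : Proc N} (h : SCong P Q) : bad s k P = bad s k Q := by
  induction h with
  | refl => rfl
  | symm _ ih => exact ih.symm
  | trans _ _ ih1 ih2 => exact ih1.trans ih2
  | parComm P Q => simp [bad, Bool.or_comm]
  | parAssoc P Q R => simp [bad, Bool.or_assoc]
  | parNil P => simp [bad]
  | congPar _ _ ih1 ih2 => simp [bad, ih1, ih2]
  | congAmb n t ρ _ ih => simpa [bad] using ih
  | congAct C t h ih => simp [bad, ih, heads_scong h]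

lemma bad_red0 (s k : N) {P Q : Proc N} (h : Red0 P Q) :
    bad s k Q = true → bad s k P = true := by
  induction h with
  | rIn n m t1 t2 t3 t4 P Q R ρ =>
      intro hq; simp [bad, heads] at hq ⊢; tauto
  | rOut n m t1 t2 t3 t4 P Q R ρ =>
      intro hq; simp [bad, heads] at hq ⊢; tauto
  | rAmb n t ρ _ ih => simpa [bad] using ih
  | rPar1 R _ ih => intro hq; simp [bad] at hq ⊢; tauto
  | rPar2 _ _ ih1 ih2 => intro hq; simp [bad] at hq ⊢; tauto
  | rStruct h1 _ h2 ih =>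
      rw [bad_scong s k h1, ← bad_scong s k h2]; exact ih

end Aux

/-- **Remark (the translation does not reflect reductions).**
There exist timed safe mobile ambient processes `P` and `Q` and configurations
`M, N ∈ M(Π)` with `M = T(P)`, `M → N` and `N = T(Q)`, yet `P ⇢̸ Q`.
The witness is `P = n^{Δt4}[in^{Δt1}m.in^{Δt2}k.out^{Δt3}s]^ρ |
m^{Δt6}[ī̄n m^{Δt5}]^ρ`, whose translation
`M = [in^{Δt1}m in^{Δt2}k out^{Δt3}s]_n^{Δt4} [ī̄n m^{Δt5}]_m^{Δt6}`
reduces in `Π` to `N = [[in^{Δt2}k out^{Δt3}s]_n^{Δt4}]_m^{Δt6}`, and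
`N = T(Q)` for `Q = m^{Δt6}[n^{Δt4}[out^{Δt3}s.in^{Δt2}k]^ρ]^ρ`,
but `P ⇢̸ Q` (for any choice of tags). -/
theorem translation_not_reflecting {Name : Type} [DecidableEq Name]
    (n m k s : Name)
    (hnm : n ≠ m) (hnk : n ≠ k) (hns : n ≠ s)
    (hmk : m ≠ k) (hms : m ≠ s) (hks : k ≠ s)
    (t1 t2 t3 t4 t5 t6 : Timer) (ρ1 ρ2 ρ3 ρ4 : Tag) :
    -- `P = n^{Δt4}[in^{Δt1}m.in^{Δt2}k.out^{Δt3}s]^ρ | m^{Δt6}[ī̄n m^{Δt5}]^ρ`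
    let P : Proc Name :=
      .par (.amb n t4 ρ1
              (.act (Cap.inn m) t1 (.act (Cap.inn k) t2 (.act (Cap.out s) t3 .nil))))
           (.amb m t6 ρ2 (.act (Cap.coIn m) t5 .nil))
    -- `Q = m^{Δt6}[n^{Δt4}[out^{Δt3}s.in^{Δt2}k]^ρ]^ρ`
    let Q : Proc Name :=
      .amb m t6 ρ3 (.amb n t4 ρ4 (.act (Cap.out s) t3 (.act (Cap.inn k) t2 .nil)))
    ∃ M N : Cfg Name,
      MReach P M ∧ MReach P N ∧
      M = trans P ∧ MStep M N ∧ N = trans Q ∧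
      ¬ Red P Q := by
  intro P Q
  have hx : ((Cap.inn m, t1) ::ₘ (Cap.inn k, t2) ::ₘ (Cap.out s, t3) ::ₘ
        (0 : Multiset (Cap Name × Timer)))
      = (Cap.inn m, t1) ::ₘ (Cap.out s, t3) ::ₘ (Cap.inn k, t2) ::ₘ 0 := by
    rw [Multiset.cons_swap (Cap.inn k, t2) (Cap.out s, t3)]
  have hstep : MStep (trans P) (trans Q) := by
    show MStep
      (0 + 0, [MTree.node n t4 ((Cap.inn m, t1) ::ₘ (Cap.inn k, t2) ::ₘ
          (Cap.out s, t3) ::ₘ 0) ([] : List (MTree Name)),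
        MTree.node m t6 ((Cap.coIn m, t5) ::ₘ 0) []])
      (0, [MTree.node m t6 0
        [MTree.node n t4 ((Cap.out s, t3) ::ₘ (Cap.inn k, t2) ::ₘ 0) []]])
    rw [hx]
    have h0 : (0 : Multiset (Cap Name × Timer)) + 0 = 0 := by simp
    rw [h0]
    exact MStep.endo (x := (Cap.out s, t3) ::ₘ (Cap.inn k, t2) ::ₘ 0)
      (y := 0) (cn := []) (cs := []) (rest := []) (List.Perm.refl _)
  refine ⟨trans P, trans Q, Relation.ReflTransGen.refl,
    Relation.ReflTransGen.single hstep, rfl, hstep, rfl, ?_⟩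
  rintro (h | ⟨-, hq⟩)
  · have hQ : bad s k Q = true := by simp [bad, heads, Q]
    have hP := bad_red0 s k h hQ
    simp [bad, heads, P] at hP
  · simp [phi, P, Q] at hq


end TimedAmbients
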